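/- arXiv:2603.24192 — 2 statements merged into one kernel-verified Lean document; each statement's English description precedes it below -/
import Mathlib

section
/- Let ε_n → 0⁺, T > 0 and let Φ : ℝ^m → ℝ^m be 1-Lipschitz. Then for every u ∈ L¹_loc(Ω;ℝ^m) and every open U ⊆ Ω: F′^{,T}(Φ∘u,U) ≤ F′^{,T}(u,U) and F″^{,T}(Φ∘u,U) ≤ F″^{,T}(u,U); moreover F′^{,T}(u,U) = lim_{M→+∞} F′^{,T}(u^M,U) and F″^{,T}(u,U) = lim_{M→+∞} F″^{,T}(u^M,U). The same conclusions hold for F′ and F″ in place of F′^{,T} and F″^{,T}. -/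
open MeasureTheory Filter Metric Set
open scoped ENNReal Topology

noncomputable section

/-- `ℝ^n` with the Euclidean norm. -/
abbrev Eu (n : ℕ) : Type := EuclideanSpace ℝ (Fin n)

/-- `g_ε(z) := min{|z|², 1/ε}`. -/
def gE {m : ℕ} (ε : ℝ) (z : Eu m) : ℝ := min (‖z‖ ^ 2) (1 / ε)

/-- `E_ε(ξ) := {x ∈ E : x + εξ ∈ E}`. -/
def shiftSet {d : ℕ} (E : Set (Eu d)) (ε : ℝ) (ξ : Eu d) : Set (Eu d) :=
  {x ∈ E | x + ε • ξ ∈ E}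
/-- The non-local functional
`F_ε(u,U) := ∫_{ℝ^d} ∫_{U_ε(ξ)} f_ε(x, ξ, (u(x+εξ)-u(x))/ε) dx dξ`. -/
def Feps {d m : ℕ} (fε : Eu d → Eu d → Eu m → ℝ) (ε : ℝ) (u : Eu d → Eu m)
    (U : Set (Eu d)) : ℝ≥0∞ :=
  ∫⁻ ξ, ∫⁻ x in shiftSet U ε ξ, ENNReal.ofReal (fε x ξ (ε⁻¹ • (u (x + ε • ξ) - u x)))

/-- The truncated-range functional
`F_ε^T(u,U) := ∫_{B_T} ∫_{U_ε(ξ)} f_ε(x, ξ, (u(x+εξ)-u(x))/ε) dx dξ`. -/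
def FepsT {d m : ℕ} (fε : Eu d → Eu d → Eu m → ℝ) (ε T : ℝ) (u : Eu d → Eu m)
    (U : Set (Eu d)) : ℝ≥0∞ :=
  ∫⁻ ξ in Metric.ball (0 : Eu d) T, ∫⁻ x in shiftSet U ε ξ,
    ENNReal.ofReal (fε x ξ (ε⁻¹ • (u (x + ε • ξ) - u x)))

/-- `u ∈ L¹_loc(Ω; ℝ^m)`: `u` is measurable and integrable on every compact subset of `Ω`. -/
def MemL1loc {d m : ℕ} (Ω : Set (Eu d)) (u : Eu d → Eu m) : Prop :=
  Measurable u ∧ ∀ K : Set (Eu d), K ⊆ Ω → IsCompact K → IntegrableOn u K volume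

/-- `u_n → u` in `L¹_loc(Ω; ℝ^m)`: `∫_K ‖u_n - u‖ → 0` for every compact `K ⊆ Ω`. -/
def TendstoL1loc {d m : ℕ} (Ω : Set (Eu d)) (un : ℕ → Eu d → Eu m) (u : Eu d → Eu m) : Prop :=
  ∀ K : Set (Eu d), K ⊆ Ω → IsCompact K →
    Tendsto (fun n => ∫ x in K, ‖un n x - u x‖) atTop (𝓝 0)

/-- The `Γ-liminf` at `u` of a sequence of functionals, with respect to `L¹_loc(Ω)`
convergence. -/
def gammaLiminf {d m : ℕ} (Fn : ℕ → (Eu d → Eu m) → ℝ≥0∞) (Ω : Set (Eu d))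
    (u : Eu d → Eu m) : ℝ≥0∞ :=
  ⨅ (un : ℕ → Eu d → Eu m) (_ : ∀ n, MemL1loc Ω (un n)) (_ : TendstoL1loc Ω un u),
    Filter.liminf (fun n => Fn n (un n)) atTop

/-- The `Γ-limsup` at `u` of a sequence of functionals, with respect to `L¹_loc(Ω)`
convergence. -/
def gammaLimsup {d m : ℕ} (Fn : ℕ → (Eu d → Eu m) → ℝ≥0∞) (Ω : Set (Eu d))
    (u : Eu d → Eu m) : ℝ≥0∞ :=
  ⨅ (un : ℕ → Eu d → Eu m) (_ : ∀ n, MemL1loc Ω (un n)) (_ : TendstoL1loc Ω un u),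
    Filter.limsup (fun n => Fn n (un n)) atTop

/-- `F′(u,U)`, the `Γ-liminf` of `F_{ε_n}(·,U)` at `u`. -/
def Fprime {d m : ℕ} (f : ℝ → Eu d → Eu d → Eu m → ℝ) (εn : ℕ → ℝ) (Ω : Set (Eu d))
    (u : Eu d → Eu m) (U : Set (Eu d)) : ℝ≥0∞ :=
  gammaLiminf (fun n v => Feps (f (εn n)) (εn n) v U) Ω u

/-- `F″(u,U)`, the `Γ-limsup` of `F_{ε_n}(·,U)` at `u`. -/
def Fsecond {d m : ℕ} (f : ℝ → Eu d → Eu d → Eu m → ℝ) (εn : ℕ → ℝ) (Ω : Set (Eu d))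
    (u : Eu d → Eu m) (U : Set (Eu d)) : ℝ≥0∞ :=
  gammaLimsup (fun n v => Feps (f (εn n)) (εn n) v U) Ω u

/-- `F′^{,T}(u,U)`, the `Γ-liminf` of `F^T_{ε_n}(·,U)` at `u`. -/
def FprimeT {d m : ℕ} (f : ℝ → Eu d → Eu d → Eu m → ℝ) (εn : ℕ → ℝ) (T : ℝ) (Ω : Set (Eu d))
    (u : Eu d → Eu m) (U : Set (Eu d)) : ℝ≥0∞ :=
  gammaLiminf (fun n v => FepsT (f (εn n)) (εn n) T v U) Ω u

/-- `F″^{,T}(u,U)`, the `Γ-limsup` of `F^T_{ε_n}(·,U)` at `u`. -/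
def FsecondT {d m : ℕ} (f : ℝ → Eu d → Eu d → Eu m → ℝ) (εn : ℕ → ℝ) (T : ℝ) (Ω : Set (Eu d))
    (u : Eu d → Eu m) (U : Set (Eu d)) : ℝ≥0∞ :=
  gammaLimsup (fun n v => FepsT (f (εn n)) (εn n) T v U) Ω u
/-- Componentwise truncation at level `M`: `(z^M)_i := min{max{z_i, -M}, M}`. -/
def trunc {m : ℕ} (M : ℝ) (z : Eu m) : Eu m :=
  (WithLp.equiv 2 (Fin m → ℝ)).symm fun i => min (max (z i) (-M)) M

section AuxTrunc

variable {d m : ℕ}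

lemma eu_abs_apply_le_norm (x : Eu m) (i : Fin m) : |x i| ≤ ‖x‖ := by
  rw [EuclideanSpace.norm_eq]
  have h1 : |x i| = Real.sqrt (‖x i‖ ^ 2) := by
    rw [Real.sqrt_sq_eq_abs]; simp [Real.norm_eq_abs]
  rw [h1]
  apply Real.sqrt_le_sqrt
  exact Finset.single_le_sum (fun j _ => sq_nonneg ‖x j‖) (Finset.mem_univ i)

lemma eu_norm_le_norm {a b : Eu m} (h : ∀ i, |a i| ≤ |b i|) : ‖a‖ ≤ ‖b‖ := by
  rw [EuclideanSpace.norm_eq, EuclideanSpace.norm_eq]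
  apply Real.sqrt_le_sqrt
  apply Finset.sum_le_sum
  intro i _
  simp only [Real.norm_eq_abs]
  exact pow_le_pow_left₀ (abs_nonneg _) (h i) 2

lemma trunc_apply (M : ℝ) (z : Eu m) (i : Fin m) :
    trunc M z i = min (max (z i) (-M)) M := rfl

lemma clamp_lip (M a b : ℝ) :
    |min (max a (-M)) M - min (max b (-M)) M| ≤ |a - b| := by
  have h1 := abs_min_sub_min_le_max (max a (-M)) M (max b (-M)) M
  have h2 := abs_max_sub_max_le_abs a b (-M)
  simp only [sub_self, abs_zero] at h1
  refine h1.trans ?_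
  rw [max_le_iff]
  exact ⟨h2, abs_nonneg _⟩

lemma clamp_abs_le {M a : ℝ} (hM : 0 ≤ M) : |min (max a (-M)) M| ≤ |a| := by
  have hub : min (max a (-M)) M ≤ |a| :=
    (min_le_left _ _).trans (max_le (le_abs_self a) (by linarith [abs_nonneg a]))
  have hlb : -|a| ≤ min (max a (-M)) M :=
    le_min ((neg_abs_le a).trans (le_max_left _ _)) (by linarith [abs_nonneg a])
  exact abs_le.mpr ⟨hlb, hub⟩

lemma clamp_id {M a : ℝ} (h : |a| ≤ M) : min (max a (-M)) M = a := by
  rw [abs_le] at h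
  rw [max_eq_left (by linarith), min_eq_left (by linarith)]

lemma clamp_clamp {M M' a : ℝ} (h0 : 0 ≤ M) (h : M ≤ M') :
    min (max (min (max a (-M')) M') (-M)) M = min (max a (-M)) M := by
  rcases le_total a (-M') with h1 | h1
  · have e1 : min (-M') M' = -M' := min_eq_left (by linarith)
    have e2 : max (-M') (-M) = -M := max_eq_right (by linarith)
    have e3 : max a (-M) = -M := max_eq_right (by linarith)
    rw [max_eq_right h1, e1, e2, e3]
  · rw [max_eq_left h1]
    rcases le_total a M' with h2 | h2
    · rw [min_eq_left h2]
    · have e1 : max M' (-M) = M' := max_eq_left (by linarith)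
      have e2 : min M' M = M := min_eq_right h
      have e3 : max a (-M) = a := max_eq_left (by linarith)
      have e4 : min a M = M := min_eq_right (by linarith)
      rw [min_eq_right h2, e1, e2, e3, e4]

lemma lipschitz_trunc (M : ℝ) : LipschitzWith 1 (trunc (m := m) M) := by
  apply LipschitzWith.of_dist_le_mul
  intro x y
  rw [NNReal.coe_one, one_mul, dist_eq_norm, dist_eq_norm]
  apply eu_norm_le_norm
  intro i
  simp only [PiLp.sub_apply, trunc_apply]
  exact clamp_lip M (x i) (y i)

lemma trunc_trunc {M M' : ℝ} (h0 : 0 ≤ M) (h : M ≤ M') (z : Eu m) :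
    trunc M (trunc M' z) = trunc M z := by
  ext i
  simp only [trunc_apply]
  exact clamp_clamp h0 h

lemma trunc_eq_self {M : ℝ} {z : Eu m} (h : ∀ i, |z i| ≤ M) : trunc M z = z := by
  ext i
  simp only [trunc_apply]
  exact clamp_id (h i)

lemma norm_trunc_le {M : ℝ} (hM : 0 ≤ M) (z : Eu m) : ‖trunc M z‖ ≤ ‖z‖ := by
  apply eu_norm_le_norm
  intro i
  simp only [trunc_apply]
  exact clamp_abs_le hM

end AuxTrunc
section AuxL1

variable {d m : ℕ}

lemma memL1loc_comp {Ω : Set (Eu d)} {v : Eu d → Eu m} (hv : MemL1loc Ω v)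
    {Φ : Eu m → Eu m} (hΦ : LipschitzWith 1 Φ) : MemL1loc Ω (fun x => Φ (v x)) := by
  refine ⟨hΦ.continuous.measurable.comp hv.1, fun K hK1 hK2 => ?_⟩
  have hg : IntegrableOn (fun x => ‖v x‖ + ‖Φ 0‖) K volume :=
    (hv.2 K hK1 hK2).norm.add ((integrableOn_const_iff (C := ‖Φ 0‖)).mpr (Or.inr hK2.measure_lt_top))
  refine Integrable.mono' hg
    ((hΦ.continuous.measurable.comp hv.1).aestronglyMeasurable) ?_
  refine Filter.Eventually.of_forall fun x => ?_
  calc ‖Φ (v x)‖ = ‖(Φ (v x) - Φ 0) + Φ 0‖ := by rw [sub_add_cancel]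
    _ ≤ ‖Φ (v x) - Φ 0‖ + ‖Φ 0‖ := norm_add_le _ _
    _ ≤ ‖v x‖ + ‖Φ 0‖ := by
        have := hΦ.norm_sub_le (v x) 0
        simp only [sub_zero, NNReal.coe_one, one_mul] at this
        exact add_le_add this le_rfl

lemma memL1loc_trunc {Ω : Set (Eu d)} {u : Eu d → Eu m} (hu : MemL1loc Ω u)
    {M : ℝ} (hM : 0 ≤ M) : MemL1loc Ω (fun x => trunc M (u x)) := by
  refine ⟨(lipschitz_trunc M).continuous.measurable.comp hu.1, fun K hK1 hK2 => ?_⟩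
  refine Integrable.mono' (hu.2 K hK1 hK2).norm
    (((lipschitz_trunc M).continuous.measurable.comp hu.1).aestronglyMeasurable) ?_
  exact Filter.Eventually.of_forall fun x => norm_trunc_le hM (u x)

lemma tendstoL1loc_comp {Ω : Set (Eu d)} {un : ℕ → Eu d → Eu m} {u : Eu d → Eu m}
    (h1 : ∀ n, MemL1loc Ω (un n)) (hu : MemL1loc Ω u) (h2 : TendstoL1loc Ω un u)
    {Φ : Eu m → Eu m} (hΦ : LipschitzWith 1 Φ) :
    TendstoL1loc Ω (fun n x => Φ (un n x)) (fun x => Φ (u x)) := by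
  intro K hK1 hK2
  refine squeeze_zero' (Filter.Eventually.of_forall fun n =>
    integral_nonneg fun x => norm_nonneg _)
    (Filter.Eventually.of_forall fun n => ?_) (h2 K hK1 hK2)
  refine integral_mono_of_nonneg (Filter.Eventually.of_forall fun x => norm_nonneg _)
    (((h1 n).2 K hK1 hK2).sub (hu.2 K hK1 hK2)).norm
    (Filter.Eventually.of_forall fun x => ?_)
  have := hΦ.norm_sub_le (un n x) (u x)
  simpa using this

lemma tendstoL1loc_trunc {Ω : Set (Eu d)} {u : Eu d → Eu m} (hu : MemL1loc Ω u) :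
    TendstoL1loc Ω (fun (k : ℕ) x => trunc (k : ℝ) (u x)) u := by
  intro K hK1 hK2
  have hi := hu.2 K hK1 hK2
  have hmeas : ∀ k : ℕ, AEStronglyMeasurable (fun x => ‖trunc (k : ℝ) (u x) - u x‖)
      (volume.restrict K) :=
    fun k => (((lipschitz_trunc (k : ℝ)).continuous.measurable.comp hu.1).sub
      hu.1).norm.aestronglyMeasurable
  have h0 : Tendsto (fun k : ℕ => ∫ x in K, ‖trunc (k : ℝ) (u x) - u x‖) atTop
      (𝓝 (∫ x in K, (0 : ℝ))) := by
    refine tendsto_integral_of_dominated_convergence (fun x => 2 * ‖u x‖) hmeas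
      (by simpa using hi.norm.const_mul 2) ?_ ?_
    · intro k
      refine Filter.Eventually.of_forall fun x => ?_
      rw [Real.norm_eq_abs, abs_of_nonneg (norm_nonneg _)]
      calc ‖trunc (k : ℝ) (u x) - u x‖ ≤ ‖trunc (k : ℝ) (u x)‖ + ‖u x‖ := norm_sub_le _ _
        _ ≤ ‖u x‖ + ‖u x‖ := add_le_add (norm_trunc_le (Nat.cast_nonneg k) _) le_rfl
        _ = 2 * ‖u x‖ := by ring
    · refine Filter.Eventually.of_forall fun x => ?_
      refine tendsto_const_nhds.congr' ?_
      filter_upwards [eventually_ge_atTop ⌈‖u x‖⌉₊] with k hk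
      have : trunc (k : ℝ) (u x) = u x := by
        refine trunc_eq_self fun i => ?_
        exact (eu_abs_apply_le_norm (u x) i).trans ((Nat.le_ceil _).trans (by exact_mod_cast hk))
      rw [this, sub_self, norm_zero]
  simpa using h0

end AuxL1
section AuxGamma

variable {d m : ℕ}

lemma gammaLiminf_comp_le (Fn : ℕ → (Eu d → Eu m) → ℝ≥0∞) (Ω : Set (Eu d))
    {Φ : Eu m → Eu m} (hΦ : LipschitzWith 1 Φ)
    (hcomp : ∀ n v, Fn n (fun x => Φ (v x)) ≤ Fn n v)
    {u : Eu d → Eu m} (hu : MemL1loc Ω u) :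
    gammaLiminf Fn Ω (fun x => Φ (u x)) ≤ gammaLiminf Fn Ω u := by
  refine le_iInf fun un => le_iInf fun h1 => le_iInf fun h2 => ?_
  calc gammaLiminf Fn Ω (fun x => Φ (u x))
      ≤ liminf (fun n => Fn n (fun x => Φ (un n x))) atTop :=
        iInf_le_of_le (fun n x => Φ (un n x))
          (iInf_le_of_le (fun n => memL1loc_comp (h1 n) hΦ)
          (iInf_le_of_le (tendstoL1loc_comp h1 hu h2 hΦ) le_rfl))
    _ ≤ liminf (fun n => Fn n (un n)) atTop :=
        Filter.liminf_le_liminf (Filter.Eventually.of_forall fun n => hcomp n (un n))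

lemma gammaLimsup_comp_le (Fn : ℕ → (Eu d → Eu m) → ℝ≥0∞) (Ω : Set (Eu d))
    {Φ : Eu m → Eu m} (hΦ : LipschitzWith 1 Φ)
    (hcomp : ∀ n v, Fn n (fun x => Φ (v x)) ≤ Fn n v)
    {u : Eu d → Eu m} (hu : MemL1loc Ω u) :
    gammaLimsup Fn Ω (fun x => Φ (u x)) ≤ gammaLimsup Fn Ω u := by
  refine le_iInf fun un => le_iInf fun h1 => le_iInf fun h2 => ?_
  calc gammaLimsup Fn Ω (fun x => Φ (u x))
      ≤ limsup (fun n => Fn n (fun x => Φ (un n x))) atTop :=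
        iInf_le_of_le (fun n x => Φ (un n x))
          (iInf_le_of_le (fun n => memL1loc_comp (h1 n) hΦ)
          (iInf_le_of_le (tendstoL1loc_comp h1 hu h2 hΦ) le_rfl))
    _ ≤ limsup (fun n => Fn n (un n)) atTop :=
        Filter.limsup_le_limsup (Filter.Eventually.of_forall fun n => hcomp n (un n))

lemma exists_exhaustion [NeZero d] {Ω : Set (Eu d)} (hΩo : IsOpen Ω)
    (hΩb : Bornology.IsBounded Ω) :
    ∃ KK : ℕ → Set (Eu d), (∀ k, IsCompact (KK k)) ∧ (∀ k, KK k ⊆ Ω) ∧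
      ∀ K : Set (Eu d), K ⊆ Ω → IsCompact K → ∃ k0, ∀ k, k0 ≤ k → K ⊆ KK k := by
  have hcne : Ωᶜ.Nonempty := by
    obtain ⟨R, hR⟩ := hΩb.subset_closedBall 0
    obtain ⟨y, hy⟩ := exists_ne (0 : Eu d)
    refine ⟨((|R| + 1) / ‖y‖) • y, fun hmem => ?_⟩
    have hynorm : 0 < ‖y‖ := norm_pos_iff.mpr hy
    have hle := hR hmem
    rw [mem_closedBall, dist_zero_right, norm_smul, Real.norm_eq_abs,
      abs_of_nonneg (by positivity : (0:ℝ) ≤ (|R| + 1) / ‖y‖),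
      div_mul_cancel₀ _ hynorm.ne'] at hle
    linarith [le_abs_self R]
  refine ⟨fun k => closure Ω ∩ {x | 1/(k+1:ℝ) ≤ infDist x Ωᶜ}, fun k => ?_, fun k => ?_, ?_⟩
  · refine isCompact_of_isClosed_isBounded
      (isClosed_closure.inter (isClosed_le continuous_const (continuous_infDist_pt Ωᶜ))) ?_
    exact hΩb.closure.subset (inter_subset_left)
  · rintro x ⟨-, hx2⟩
    by_contra hxc
    have h0 : infDist x Ωᶜ = 0 := infDist_zero_of_mem hxc
    rw [mem_setOf_eq, h0] at hx2
    have : (0:ℝ) < 1/(k+1:ℝ) := by positivity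
    linarith
  · intro K hK1 hK2
    rcases K.eq_empty_or_nonempty with hKe | hKne
    · exact ⟨0, fun k _ => by simp [hKe]⟩
    obtain ⟨x0, hx0, hx0min⟩ := hK2.exists_isMinOn hKne (continuous_infDist_pt Ωᶜ).continuousOn
    have hpos : 0 < infDist x0 Ωᶜ := by
      rw [← (hΩo.isClosed_compl).notMem_iff_infDist_pos hcne]
      exact not_not.mpr (hK1 hx0)
    obtain ⟨k0, hk0⟩ := exists_nat_one_div_lt hpos
    refine ⟨k0, fun k hk x hx => ?_⟩
    refine ⟨subset_closure (hK1 hx), ?_⟩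
    rw [mem_setOf_eq]
    have h1 : 1/(k+1:ℝ) ≤ 1/(k0+1:ℝ) := by
      apply one_div_le_one_div_of_le (by positivity)
      exact_mod_cast by exact_mod_cast Nat.add_le_add_right hk 1
    exact h1.trans (le_trans hk0.le (hx0min hx))

lemma integral_tri {d m : ℕ} {Ω : Set (Eu d)} {K : Set (Eu d)} (hK1 : K ⊆ Ω)
    (hK2 : IsCompact K) {A B u : Eu d → Eu m} (hA : MemL1loc Ω A) (hB : MemL1loc Ω B)
    (hu : MemL1loc Ω u) :
    ∫ x in K, ‖A x - u x‖ ≤ (∫ x in K, ‖A x - B x‖) + ∫ x in K, ‖B x - u x‖ := by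
  have hint1 : IntegrableOn (fun x => ‖A x - B x‖) K volume :=
    ((hA.2 K hK1 hK2).sub (hB.2 K hK1 hK2)).norm
  have hint2 : IntegrableOn (fun x => ‖B x - u x‖) K volume :=
    ((hB.2 K hK1 hK2).sub (hu.2 K hK1 hK2)).norm
  rw [← integral_add hint1 hint2]
  refine integral_mono_of_nonneg (Filter.Eventually.of_forall fun x => norm_nonneg _)
    (hint1.add hint2) (Filter.Eventually.of_forall fun x => ?_)
  have := dist_triangle (A x) (B x) (u x)
  simpa [dist_eq_norm] using this

end AuxGamma
section AuxDiagonal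

variable {d m : ℕ}

lemma gammaLiminf_le_iSup [NeZero d] (Fn : ℕ → (Eu d → Eu m) → ℝ≥0∞)
    {Ω : Set (Eu d)} (hΩo : IsOpen Ω) (hΩb : Bornology.IsBounded Ω)
    {u : Eu d → Eu m} (hu : MemL1loc Ω u)
    {uk : ℕ → Eu d → Eu m} (huk : ∀ k, MemL1loc Ω (uk k))
    (hconv : TendstoL1loc Ω uk u) :
    gammaLiminf Fn Ω u ≤ ⨆ k, gammaLiminf Fn Ω (uk k) := by
  classical
  obtain ⟨KK, hKc, hKΩ, hKabs⟩ := exists_exhaustion hΩo hΩb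
  refine ENNReal.le_of_forall_pos_le_add fun η hη hS => ?_
  set S := ⨆ k, gammaLiminf Fn Ω (uk k) with hSdef
  have hlt : ∀ k, gammaLiminf Fn Ω (uk k) < S + η :=
    fun k => lt_of_le_of_lt (le_iSup (fun k => gammaLiminf Fn Ω (uk k)) k)
      (ENNReal.lt_add_right hS.ne (by exact_mod_cast hη.ne'))
  have hex : ∀ k, ∃ w : ℕ → Eu d → Eu m, (∀ n, MemL1loc Ω (w n)) ∧
      TendstoL1loc Ω w (uk k) ∧ liminf (fun n => Fn n (w n)) atTop < S + η := by
    intro k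
    have h := hlt k
    rw [gammaLiminf] at h
    simp only [iInf_lt_iff] at h
    obtain ⟨w, h1, h2, h3⟩ := h
    exact ⟨w, h1, h2, h3⟩
  choose w hw1 hw2 hw3 using hex
  have hNex : ∀ k, ∃ N, ∀ n, N ≤ n → ∫ x in KK k, ‖w k n x - uk k x‖ < 1/(k+1:ℝ) := by
    intro k
    have h := hw2 k (KK k) (hKΩ k) (hKc k)
    have hpos : (0:ℝ) < 1/(k+1:ℝ) := by positivity
    rcases Metric.tendsto_atTop.mp h _ hpos with ⟨N, hN⟩
    refine ⟨N, fun n hn => ?_⟩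
    have := hN n hn
    rw [Real.dist_eq, sub_zero] at this
    exact lt_of_le_of_lt (le_abs_self _) this
  choose N hN using hNex
  have hfreq : ∀ k, ∀ a : ℕ, ∃ b ≥ a, Fn b (w k b) < S + η := by
    intro k
    exact frequently_atTop.mp (frequently_lt_of_liminf_lt (by isBoundedDefault) (hw3 k))
  obtain ⟨n, hnmono, hn0, hngood⟩ : ∃ n : ℕ → ℕ, StrictMono n ∧ (∀ k, N k ≤ n k) ∧
      ∀ k, Fn (n k) (w k (n k)) < S + η := by
    choose pick hpick1 hpick2 using fun k a => hfreq k a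
    refine ⟨fun k => Nat.rec (pick 0 (N 0)) (fun k ih => pick (k+1) (max (N (k+1)) (ih+1))) k,
      ?_, ?_, ?_⟩
    · apply strictMono_nat_of_lt_succ
      intro k
      exact lt_of_lt_of_le (Nat.lt_succ_self _) ((le_max_right _ _).trans (hpick1 (k+1) _))
    · intro k
      cases k with
      | zero => exact hpick1 0 _
      | succ k => exact (le_max_left _ _).trans (hpick1 _ _)
    · intro k
      cases k with
      | zero => exact hpick2 0 _
      | succ k => exact hpick2 _ _
  set v : ℕ → Eu d → Eu m := fun j => if h : ∃ k, n k = j then w h.choose j else u with hvdef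
  have hveq : ∀ j (h : ∃ k, n k = j), v j = w h.choose j := by
    intro j h
    simp only [hvdef]
    rw [dif_pos h]
  have hveq' : ∀ j, (¬ ∃ k, n k = j) → v j = u := by
    intro j h
    simp only [hvdef]
    rw [dif_neg h]
  have hv1 : ∀ j, MemL1loc Ω (v j) := by
    intro j
    by_cases h : ∃ k, n k = j
    · rw [hveq j h]; exact hw1 _ j
    · rw [hveq' j h]; exact hu
  have hv2 : TendstoL1loc Ω v u := by
    intro K hK1 hK2
    obtain ⟨k0, hk0⟩ := hKabs K hK1 hK2
    have hβ : Tendsto (fun k => ∫ x in K, ‖uk k x - u x‖) atTop (𝓝 0) := hconv K hK1 hK2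
    rw [Metric.tendsto_atTop]
    intro ε hε
    have hsum : Tendsto (fun k : ℕ => 1/(k+1:ℝ) + ∫ x in K, ‖uk k x - u x‖) atTop (𝓝 0) := by
      simpa using tendsto_one_div_add_atTop_nhds_zero_nat.add hβ
    obtain ⟨k1, hk1⟩ := Metric.tendsto_atTop.mp hsum ε hε
    refine ⟨n (max k0 k1), fun j hj => ?_⟩
    by_cases h : ∃ k, n k = j
    · have hk'eq : n h.choose = j := h.choose_spec
      set k' := h.choose with hk'def
      have hk'ge : max k0 k1 ≤ k' := by
        by_contra hc
        push_neg at hc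
        have : n k' < n (max k0 k1) := hnmono hc
        omega
      have hKsub : K ⊆ KK k' := hk0 k' ((le_max_left _ _).trans hk'ge)
      have e1 : ∫ x in K, ‖w k' j x - uk k' x‖ ≤ ∫ x in KK k', ‖w k' j x - uk k' x‖ :=
        setIntegral_mono_set
          (((hw1 k' j).2 _ (hKΩ k') (hKc k')).sub ((huk k').2 _ (hKΩ k') (hKc k'))).norm
          (Filter.Eventually.of_forall fun x => norm_nonneg _)
          (HasSubset.Subset.eventuallyLE hKsub)
      have e2 : ∫ x in KK k', ‖w k' j x - uk k' x‖ < 1/(k'+1:ℝ) :=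
        hN k' j (hk'eq ▸ hn0 k')
      have e3 : ∫ x in K, ‖v j x - u x‖ ≤
          (∫ x in K, ‖w k' j x - uk k' x‖) + ∫ x in K, ‖uk k' x - u x‖ := by
        rw [hveq j h]
        exact integral_tri hK1 hK2 (hw1 k' j) (huk k') hu
      have e4 := hk1 k' ((le_max_right _ _).trans hk'ge)
      rw [Real.dist_eq, sub_zero] at e4
      have e4' : 1/(k'+1:ℝ) + ∫ x in K, ‖uk k' x - u x‖ < ε :=
        lt_of_le_of_lt (le_abs_self _) e4
      rw [Real.dist_eq, sub_zero,
        abs_of_nonneg (integral_nonneg fun x => norm_nonneg _)]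
      calc ∫ x in K, ‖v j x - u x‖
          ≤ (∫ x in K, ‖w k' j x - uk k' x‖) + ∫ x in K, ‖uk k' x - u x‖ := e3
        _ < 1/(k'+1:ℝ) + ∫ x in K, ‖uk k' x - u x‖ := by linarith
        _ < ε := e4'
    · rw [hveq' j h]
      simpa [Real.dist_eq] using hε
  have hvgood : ∀ k, Fn (n k) (v (n k)) < S + η := by
    intro k
    have h : ∃ k', n k' = n k := ⟨k, rfl⟩
    have hg := hngood h.choose
    rw [h.choose_spec] at hg
    rw [hveq (n k) h]
    exact hg
  calc gammaLiminf Fn Ω u ≤ liminf (fun j => Fn j (v j)) atTop :=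
        iInf_le_of_le v (iInf_le_of_le hv1 (iInf_le_of_le hv2 le_rfl))
    _ ≤ S + η :=
        liminf_le_of_frequently_le
          (frequently_atTop.mpr fun a => ⟨n a, hnmono.le_apply, (hvgood a).le⟩)
          (by isBoundedDefault)

end AuxDiagonal
section AuxDiagonal2

variable {d m : ℕ}

lemma gammaLimsup_le_iSup [NeZero d] (Fn : ℕ → (Eu d → Eu m) → ℝ≥0∞)
    {Ω : Set (Eu d)} (hΩo : IsOpen Ω) (hΩb : Bornology.IsBounded Ω)
    {u : Eu d → Eu m} (hu : MemL1loc Ω u)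
    {uk : ℕ → Eu d → Eu m} (huk : ∀ k, MemL1loc Ω (uk k))
    (hconv : TendstoL1loc Ω uk u) :
    gammaLimsup Fn Ω u ≤ ⨆ k, gammaLimsup Fn Ω (uk k) := by
  classical
  obtain ⟨KK, hKc, hKΩ, hKabs⟩ := exists_exhaustion hΩo hΩb
  refine ENNReal.le_of_forall_pos_le_add fun η hη hS => ?_
  set S := ⨆ k, gammaLimsup Fn Ω (uk k) with hSdef
  have hlt : ∀ k, gammaLimsup Fn Ω (uk k) < S + η :=
    fun k => lt_of_le_of_lt (le_iSup (fun k => gammaLimsup Fn Ω (uk k)) k)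
      (ENNReal.lt_add_right hS.ne (by exact_mod_cast hη.ne'))
  have hex : ∀ k, ∃ w : ℕ → Eu d → Eu m, (∀ n, MemL1loc Ω (w n)) ∧
      TendstoL1loc Ω w (uk k) ∧ limsup (fun n => Fn n (w n)) atTop < S + η := by
    intro k
    have h := hlt k
    rw [gammaLimsup] at h
    simp only [iInf_lt_iff] at h
    obtain ⟨w, h1, h2, h3⟩ := h
    exact ⟨w, h1, h2, h3⟩
  choose w hw1 hw2 hw3 using hex
  have hNex : ∀ k, ∃ N, ∀ n, N ≤ n → ∫ x in KK k, ‖w k n x - uk k x‖ < 1/(k+1:ℝ) := by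
    intro k
    have h := hw2 k (KK k) (hKΩ k) (hKc k)
    have hpos : (0:ℝ) < 1/(k+1:ℝ) := by positivity
    rcases Metric.tendsto_atTop.mp h _ hpos with ⟨N, hN⟩
    refine ⟨N, fun n hn => ?_⟩
    have := hN n hn
    rw [Real.dist_eq, sub_zero] at this
    exact lt_of_le_of_lt (le_abs_self _) this
  choose N hN using hNex
  have hMex : ∀ k, ∃ Mth, ∀ j, Mth ≤ j → Fn j (w k j) < S + η := by
    intro k
    exact eventually_atTop.mp (eventually_lt_of_limsup_lt (hw3 k) (by isBoundedDefault))
  choose Mth hMth using hMex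
  set P : ℕ → ℕ := fun k => max (N k) (Mth k) with hPdef
  set Q : ℕ → ℕ := fun k => (Finset.range (k+1)).sup P + k with hQdef
  have hQP : ∀ k, P k ≤ Q k := fun k =>
    le_add_right (Finset.le_sup (Finset.mem_range.mpr (Nat.lt_succ_self k)))
  have hQk : ∀ k, k ≤ Q k := fun k => Nat.le_add_left k _
  have hQmono : Monotone Q := by
    intro a b hab
    exact Nat.add_le_add (Finset.sup_mono (Finset.range_subset_range.mpr (by omega))) hab
  set c : ℕ → ℕ := fun j => Nat.findGreatest (fun k => Q k ≤ j) j with hcdef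
  have hc1 : ∀ j k, Q k ≤ j → k ≤ c j := fun j k h =>
    Nat.le_findGreatest ((hQk k).trans h) h
  have hc2 : ∀ j, Q 0 ≤ j → Q (c j) ≤ j := by
    intro j hj
    exact Nat.findGreatest_spec (P := fun k => Q k ≤ j) (Nat.zero_le j) hj
  set v : ℕ → Eu d → Eu m := fun j => if Q 0 ≤ j then w (c j) j else u with hvdef
  have hveq : ∀ j, Q 0 ≤ j → v j = w (c j) j := by
    intro j h
    simp only [hvdef]
    rw [if_pos h]
  have hveq' : ∀ j, ¬ Q 0 ≤ j → v j = u := by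
    intro j h
    simp only [hvdef]
    rw [if_neg h]
  have hv1 : ∀ j, MemL1loc Ω (v j) := by
    intro j
    by_cases h : Q 0 ≤ j
    · rw [hveq j h]; exact hw1 _ j
    · rw [hveq' j h]; exact hu
  have hv2 : TendstoL1loc Ω v u := by
    intro K hK1 hK2
    obtain ⟨k0, hk0⟩ := hKabs K hK1 hK2
    have hβ : Tendsto (fun k => ∫ x in K, ‖uk k x - u x‖) atTop (𝓝 0) := hconv K hK1 hK2
    rw [Metric.tendsto_atTop]
    intro ε hε
    have hsum : Tendsto (fun k : ℕ => 1/(k+1:ℝ) + ∫ x in K, ‖uk k x - u x‖) atTop (𝓝 0) := by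
      simpa using tendsto_one_div_add_atTop_nhds_zero_nat.add hβ
    obtain ⟨k1, hk1⟩ := Metric.tendsto_atTop.mp hsum ε hε
    refine ⟨Q (max k0 k1), fun j hj => ?_⟩
    have hQ0 : Q 0 ≤ j := (hQmono (Nat.zero_le _)).trans hj
    have hcge : max k0 k1 ≤ c j := hc1 j _ hj
    have hQcj : Q (c j) ≤ j := hc2 j hQ0
    have hKsub : K ⊆ KK (c j) := hk0 (c j) ((le_max_left _ _).trans hcge)
    have e1 : ∫ x in K, ‖w (c j) j x - uk (c j) x‖ ≤ ∫ x in KK (c j), ‖w (c j) j x - uk (c j) x‖ :=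
      setIntegral_mono_set
        (((hw1 (c j) j).2 _ (hKΩ (c j)) (hKc (c j))).sub
          ((huk (c j)).2 _ (hKΩ (c j)) (hKc (c j)))).norm
        (Filter.Eventually.of_forall fun x => norm_nonneg _)
        (HasSubset.Subset.eventuallyLE hKsub)
    have e2 : ∫ x in KK (c j), ‖w (c j) j x - uk (c j) x‖ < 1/((c j)+1:ℝ) :=
      hN (c j) j (((le_max_left _ _).trans (hQP (c j))).trans hQcj)
    have e3 : ∫ x in K, ‖v j x - u x‖ ≤
        (∫ x in K, ‖w (c j) j x - uk (c j) x‖) + ∫ x in K, ‖uk (c j) x - u x‖ := by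
      rw [hveq j hQ0]
      exact integral_tri hK1 hK2 (hw1 (c j) j) (huk (c j)) hu
    have e4 := hk1 (c j) ((le_max_right _ _).trans hcge)
    rw [Real.dist_eq, sub_zero] at e4
    have e4' : 1/((c j)+1:ℝ) + ∫ x in K, ‖uk (c j) x - u x‖ < ε :=
      lt_of_le_of_lt (le_abs_self _) e4
    rw [Real.dist_eq, sub_zero,
      abs_of_nonneg (integral_nonneg fun x => norm_nonneg _)]
    calc ∫ x in K, ‖v j x - u x‖
        ≤ (∫ x in K, ‖w (c j) j x - uk (c j) x‖) + ∫ x in K, ‖uk (c j) x - u x‖ := e3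
      _ < 1/((c j)+1:ℝ) + ∫ x in K, ‖uk (c j) x - u x‖ := by linarith
      _ < ε := e4'
  have hvgood : ∀ j, Q 0 ≤ j → Fn j (v j) < S + η := by
    intro j hj
    rw [hveq j hj]
    exact hMth (c j) j (((le_max_right _ _).trans (hQP (c j))).trans (hc2 j hj))
  calc gammaLimsup Fn Ω u ≤ limsup (fun j => Fn j (v j)) atTop :=
        iInf_le_of_le v (iInf_le_of_le hv1 (iInf_le_of_le hv2 le_rfl))
    _ ≤ S + η :=
        limsup_le_of_le (by isBoundedDefault)
          ((eventually_ge_atTop (Q 0)).mono fun j hj => (hvgood j hj).le)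

end AuxDiagonal2
section AuxFinal

variable {d m : ℕ}

lemma tendsto_trunc_gamma {G : (Eu d → Eu m) → ℝ≥0∞} {Ω : Set (Eu d)} {u : Eu d → Eu m}
    (hu : MemL1loc Ω u)
    (hcomp : ∀ Φ : Eu m → Eu m, LipschitzWith 1 Φ → ∀ v : Eu d → Eu m, MemL1loc Ω v →
      G (fun x => Φ (v x)) ≤ G v)
    (hsup : G u ≤ ⨆ k : ℕ, G (fun x => trunc (k : ℝ) (u x))) :
    Tendsto (fun M : ℝ => G (fun x => trunc M (u x))) atTop (𝓝 (G u)) := by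
  set H : ℝ → ℝ≥0∞ := fun M => G (fun x => trunc (max M 0) (u x)) with hH
  have hHmono : Monotone H := by
    intro M1 M2 h
    have h0 : (0:ℝ) ≤ max M1 0 := le_max_right _ _
    have h1 : max M1 0 ≤ max M2 0 := max_le_max h le_rfl
    have heq : (fun x => trunc (max M1 0) (u x)) =
        (fun x => trunc (max M1 0) ((fun y => trunc (max M2 0) (u y)) x)) := by
      funext x
      exact (trunc_trunc h0 h1 (u x)).symm
    simp only [hH]
    rw [heq]
    exact hcomp (trunc (max M1 0)) (lipschitz_trunc _) _
      (memL1loc_trunc hu (le_max_right _ _))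
  have hsup2 : (⨆ M, H M) = G u := by
    apply le_antisymm
    · exact iSup_le fun M => hcomp (trunc (max M 0)) (lipschitz_trunc _) u hu
    · refine hsup.trans (iSup_le fun k => ?_)
      refine le_trans (le_of_eq ?_) (le_iSup H (k:ℝ))
      simp only [hH]
      rw [max_eq_left (Nat.cast_nonneg k)]
  have htend : Tendsto H atTop (𝓝 (G u)) := hsup2 ▸ tendsto_atTop_iSup hHmono
  refine htend.congr' ?_
  filter_upwards [eventually_ge_atTop (0:ℝ)] with M hM
  simp only [hH]
  rw [max_eq_left hM]

lemma Feps_comp_le {f : Eu d → Eu d → Eu m → ℝ} {ε : ℝ}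
    (hmono : ∀ᵐ q : Eu d × Eu d, ∀ z₁ z₂ : Eu m, ‖z₁‖ ≤ ‖z₂‖ → f q.1 q.2 z₁ ≤ f q.1 q.2 z₂)
    {Φ : Eu m → Eu m} (hΦ : LipschitzWith 1 Φ) (v : Eu d → Eu m) (U : Set (Eu d)) (T : ℝ) :
    Feps f ε (fun x => Φ (v x)) U ≤ Feps f ε v U ∧
      FepsT f ε T (fun x => Φ (v x)) U ≤ FepsT f ε T v U := by
  have hswap : ∀ᵐ ξ : Eu d, ∀ᵐ x : Eu d, ∀ z₁ z₂ : Eu m, ‖z₁‖ ≤ ‖z₂‖ → f x ξ z₁ ≤ f x ξ z₂ := by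
    have hq : Measure.QuasiMeasurePreserving (Prod.swap : Eu d × Eu d → Eu d × Eu d)
        volume volume := by
      rw [Measure.volume_eq_prod]
      exact Measure.measurePreserving_swap.quasiMeasurePreserving
    have h0 : ∀ᵐ q : Eu d × Eu d, ∀ z₁ z₂ : Eu m, ‖z₁‖ ≤ ‖z₂‖ → f q.2 q.1 z₁ ≤ f q.2 q.1 z₂ :=
      hq.ae hmono
    rw [Measure.volume_eq_prod] at h0
    exact Measure.ae_ae_of_ae_prod h0
  have key : ∀ᵐ ξ : Eu d,
      (∫⁻ x in shiftSet U ε ξ,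
        ENNReal.ofReal (f x ξ (ε⁻¹ • (Φ (v (x + ε • ξ)) - Φ (v x))))) ≤
      ∫⁻ x in shiftSet U ε ξ, ENNReal.ofReal (f x ξ (ε⁻¹ • (v (x + ε • ξ) - v x))) := by
    filter_upwards [hswap] with ξ hξ
    refine lintegral_mono_ae (ae_restrict_of_ae ?_)
    filter_upwards [hξ] with x hx
    apply ENNReal.ofReal_le_ofReal
    apply hx
    rw [norm_smul, norm_smul]
    refine mul_le_mul_of_nonneg_left ?_ (norm_nonneg _)
    simpa using hΦ.norm_sub_le (v (x + ε • ξ)) (v x)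
  exact ⟨lintegral_mono_ae key, lintegral_mono_ae (ae_restrict_of_ae key)⟩

end AuxFinal
/-- Lemma on vertical truncations: for a `1`-Lipschitz `Φ : ℝ^m → ℝ^m`,
`F′^{,T}(Φ∘u,U) ≤ F′^{,T}(u,U)` and `F″^{,T}(Φ∘u,U) ≤ F″^{,T}(u,U)`; moreover
`F′^{,T}(u,U) = lim_{M→∞} F′^{,T}(u^M,U)` and `F″^{,T}(u,U) = lim_{M→∞} F″^{,T}(u^M,U)`.
The same conclusions hold for `F′` and `F″`. -/
theorem statement3 {d m : ℕ} [NeZero d] [NeZero m]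
    (Ω : Set (Eu d)) (hΩo : IsOpen Ω) (hΩb : Bornology.IsBounded Ω)
    (f : ℝ → Eu d → Eu d → Eu m → ℝ)
    (hfmeas : ∀ ε > (0 : ℝ), Measurable fun q : Eu d × Eu d × Eu m => f ε q.1 q.2.1 q.2.2)
    (hfnn : ∀ ε > (0 : ℝ), ∀ x ξ z, 0 ≤ f ε x ξ z)
    (hfmono : ∀ ε > (0 : ℝ), ∀ᵐ q : Eu d × Eu d, ∀ z₁ z₂ : Eu m,
      ‖z₁‖ ≤ ‖z₂‖ → f ε q.1 q.2 z₁ ≤ f ε q.1 q.2 z₂)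
    (εn : ℕ → ℝ) (hεpos : ∀ n, 0 < εn n) (hεlim : Tendsto εn atTop (𝓝 0))
    (T : ℝ) (hT : 0 < T)
    (Φ : Eu m → Eu m) (hΦ : LipschitzWith 1 Φ)
    (u : Eu d → Eu m) (hu : MemL1loc Ω u)
    (U : Set (Eu d)) (hUo : IsOpen U) (hUΩ : U ⊆ Ω) :
    (FprimeT f εn T Ω (Φ ∘ u) U ≤ FprimeT f εn T Ω u U) ∧
    (FsecondT f εn T Ω (Φ ∘ u) U ≤ FsecondT f εn T Ω u U) ∧
    Tendsto (fun M : ℝ => FprimeT f εn T Ω (fun x => trunc M (u x)) U) atTop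
      (𝓝 (FprimeT f εn T Ω u U)) ∧
    Tendsto (fun M : ℝ => FsecondT f εn T Ω (fun x => trunc M (u x)) U) atTop
      (𝓝 (FsecondT f εn T Ω u U)) ∧
    (Fprime f εn Ω (Φ ∘ u) U ≤ Fprime f εn Ω u U) ∧
    (Fsecond f εn Ω (Φ ∘ u) U ≤ Fsecond f εn Ω u U) ∧
    Tendsto (fun M : ℝ => Fprime f εn Ω (fun x => trunc M (u x)) U) atTop
      (𝓝 (Fprime f εn Ω u U)) ∧
    Tendsto (fun M : ℝ => Fsecond f εn Ω (fun x => trunc M (u x)) U) atTop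
      (𝓝 (Fsecond f εn Ω u U)) := by
  classical
  have hcompF : ∀ (Ψ : Eu m → Eu m), LipschitzWith 1 Ψ → ∀ (n : ℕ) (v : Eu d → Eu m),
      Feps (f (εn n)) (εn n) (fun x => Ψ (v x)) U ≤ Feps (f (εn n)) (εn n) v U :=
    fun Ψ hΨ n v => (Feps_comp_le (hfmono (εn n) (hεpos n)) hΨ v U T).1
  have hcompT : ∀ (Ψ : Eu m → Eu m), LipschitzWith 1 Ψ → ∀ (n : ℕ) (v : Eu d → Eu m),
      FepsT (f (εn n)) (εn n) T (fun x => Ψ (v x)) U ≤ FepsT (f (εn n)) (εn n) T v U :=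
    fun Ψ hΨ n v => (Feps_comp_le (hfmono (εn n) (hεpos n)) hΨ v U T).2
  refine ⟨?_, ?_, ?_, ?_, ?_, ?_, ?_, ?_⟩
  · exact gammaLiminf_comp_le (fun n v => FepsT (f (εn n)) (εn n) T v U) Ω hΦ
      (hcompT Φ hΦ) hu
  · exact gammaLimsup_comp_le (fun n v => FepsT (f (εn n)) (εn n) T v U) Ω hΦ
      (hcompT Φ hΦ) hu
  · exact tendsto_trunc_gamma hu
      (fun Ψ hΨ v hv => gammaLiminf_comp_le (fun n v => FepsT (f (εn n)) (εn n) T v U) Ω hΨ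
        (hcompT Ψ hΨ) hv)
      (gammaLiminf_le_iSup (fun n v => FepsT (f (εn n)) (εn n) T v U) hΩo hΩb hu
        (fun k => memL1loc_trunc hu (Nat.cast_nonneg k)) (tendstoL1loc_trunc hu))
  · exact tendsto_trunc_gamma hu
      (fun Ψ hΨ v hv => gammaLimsup_comp_le (fun n v => FepsT (f (εn n)) (εn n) T v U) Ω hΨ
        (hcompT Ψ hΨ) hv)
      (gammaLimsup_le_iSup (fun n v => FepsT (f (εn n)) (εn n) T v U) hΩo hΩb hu
        (fun k => memL1loc_trunc hu (Nat.cast_nonneg k)) (tendstoL1loc_trunc hu))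
  · exact gammaLiminf_comp_le (fun n v => Feps (f (εn n)) (εn n) v U) Ω hΦ
      (hcompF Φ hΦ) hu
  · exact gammaLimsup_comp_le (fun n v => Feps (f (εn n)) (εn n) v U) Ω hΦ
      (hcompF Φ hΦ) hu
  · exact tendsto_trunc_gamma hu
      (fun Ψ hΨ v hv => gammaLiminf_comp_le (fun n v => Feps (f (εn n)) (εn n) v U) Ω hΨ
        (hcompF Ψ hΨ) hv)
      (gammaLiminf_le_iSup (fun n v => Feps (f (εn n)) (εn n) v U) hΩo hΩb hu
        (fun k => memL1loc_trunc hu (Nat.cast_nonneg k)) (tendstoL1loc_trunc hu))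
  · exact tendsto_trunc_gamma hu
      (fun Ψ hΨ v hv => gammaLimsup_comp_le (fun n v => Feps (f (εn n)) (εn n) v U) Ω hΨ
        (hcompF Ψ hΨ) hv)
      (gammaLimsup_le_iSup (fun n v => Feps (f (εn n)) (εn n) v U) hΩo hΩb hu
        (fun k => memL1loc_trunc hu (Nat.cast_nonneg k)) (tendstoL1loc_trunc hu))
end
end

section
/- Let ε_n → 0⁺, let u ∈ L^∞(Ω;ℝ^m) and let U ⊆ Ω be open. Then F′(u,U) = inf{liminf_{n→∞} F_{ε_n}(u_n,U) : u_n → u in L¹_loc(Ω;ℝ^m) and ‖u_n‖_{L^∞(Ω;ℝ^m)} ≤ √m ‖u‖_{L^∞(Ω;ℝ^m)} for every n}, and the analogous identity holds for F″ with limsup in place of liminf; the same identities hold for F′^{,T} and F″^{,T} for every T > 0. -/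
open MeasureTheory Filter Metric Set
open scoped ENNReal Topology

noncomputable section

namespace St10Aux

def trunc {m : ℕ} (M : ℝ) (z : Eu m) : Eu m := WithLp.toLp 2 (fun i => max (-M) (min M (z i)))

lemma abs_clamp (M a b : ℝ) :
    |max (-M) (min M a) - max (-M) (min M b)| ≤ |a - b| := by
  calc |max (-M) (min M a) - max (-M) (min M b)|
      = |max (min M a) (-M) - max (min M b) (-M)| := by
        rw [max_comm (-M) (min M a), max_comm (-M) (min M b)]
    _ ≤ |min M a - min M b| := abs_max_sub_max_le_abs _ _ _
    _ ≤ max |M - M| |a - b| := abs_min_sub_min_le_max _ _ _ _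
    _ = |a - b| := by simp

lemma trunc_lip {m : ℕ} (M : ℝ) (a b : Eu m) :
    ‖trunc M a - trunc M b‖ ≤ ‖a - b‖ := by
  rw [EuclideanSpace.norm_eq, EuclideanSpace.norm_eq]
  apply Real.sqrt_le_sqrt
  apply Finset.sum_le_sum
  intro i _
  have h1 : (trunc M a - trunc M b) i = max (-M) (min M (a i)) - max (-M) (min M (b i)) := rfl
  have h2 : (a - b) i = a i - b i := rfl
  rw [h1, h2, Real.norm_eq_abs, Real.norm_eq_abs]
  exact pow_le_pow_left₀ (abs_nonneg _) (abs_clamp M (a i) (b i)) 2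

lemma trunc_norm_le {m : ℕ} {M : ℝ} (hM : 0 ≤ M) (z : Eu m) :
    ‖trunc M z‖ ≤ Real.sqrt m * M := by
  rw [EuclideanSpace.norm_eq]
  have hbound : ∀ i : Fin m, ‖trunc M z i‖ ^ 2 ≤ M ^ 2 := by
    intro i
    rw [Real.norm_eq_abs]
    have habs : |trunc M z i| ≤ M := by
      rw [abs_le]
      constructor
      · exact le_max_left _ _
      · exact max_le (by linarith) (min_le_left _ _)
    exact pow_le_pow_left₀ (abs_nonneg _) habs 2
  calc Real.sqrt (∑ i : Fin m, ‖trunc M z i‖ ^ 2)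
      ≤ Real.sqrt (∑ _i : Fin m, M ^ 2) :=
        Real.sqrt_le_sqrt (Finset.sum_le_sum fun i _ => hbound i)
    _ = Real.sqrt m * M := by
        rw [Finset.sum_const, Finset.card_univ, Fintype.card_fin, nsmul_eq_mul,
          Real.sqrt_mul (by positivity), Real.sqrt_sq hM]

lemma trunc_eq_self {m : ℕ} {M : ℝ} {z : Eu m} (h : ‖z‖ ≤ M) : trunc M z = z := by
  ext i
  have hi : |z i| ≤ M := by
    refine le_trans ?_ h
    rw [EuclideanSpace.norm_eq, ← Real.sqrt_sq_eq_abs]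
    apply Real.sqrt_le_sqrt
    have := Finset.single_le_sum (f := fun j : Fin m => ‖z j‖ ^ 2)
      (fun j _ => by positivity) (Finset.mem_univ i)
    simpa [Real.norm_eq_abs, sq_abs] using this
  have := abs_le.mp hi
  show max (-M) (min M (z i)) = z i
  rw [min_eq_right this.2, max_eq_right this.1]

lemma trunc_measurable {m : ℕ} (M : ℝ) : Measurable (trunc (m := m) M) := by
  refine (WithLp.measurable_toLp 2 (Fin m → ℝ)).comp ?_
  apply measurable_pi_lambda
  intro i
  exact Measurable.max measurable_const (Measurable.min measurable_const
    ((measurable_pi_apply i).comp (WithLp.measurable_ofLp 2 (Fin m → ℝ))))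

end St10Aux

namespace St10Aux

def shiftSet' {d : ℕ} (E : Set (Eu d)) (ε : ℝ) (ξ : Eu d) : Set (Eu d) :=
  {x ∈ E | x + ε • ξ ∈ E}

-- swap the a.e. quantifiers
lemma ae_swap_mono {d m : ℕ} {f : Eu d → Eu d → Eu m → ℝ}
    (h : ∀ᵐ q : Eu d × Eu d, ∀ z₁ z₂ : Eu m, ‖z₁‖ ≤ ‖z₂‖ → f q.1 q.2 z₁ ≤ f q.1 q.2 z₂) :
    ∀ᵐ ξ : Eu d, ∀ᵐ x : Eu d, ∀ z₁ z₂ : Eu m, ‖z₁‖ ≤ ‖z₂‖ → f x ξ z₁ ≤ f x ξ z₂ := by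
  have hqmp : Measure.QuasiMeasurePreserving (Prod.swap : Eu d × Eu d → Eu d × Eu d)
      volume volume := by
    rw [MeasureTheory.Measure.volume_eq_prod]
    exact Measure.measurePreserving_swap.quasiMeasurePreserving
  have hswap : ∀ᵐ q : Eu d × Eu d, ∀ z₁ z₂ : Eu m, ‖z₁‖ ≤ ‖z₂‖ →
      f q.2 q.1 z₁ ≤ f q.2 q.1 z₂ := hqmp.tendsto_ae.eventually h
  rw [MeasureTheory.Measure.volume_eq_prod] at hswap
  exact Measure.ae_ae_of_ae_prod hswap

-- inner set-integral monotonicity under truncation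
lemma inner_mono {d m : ℕ} {f : Eu d → Eu d → Eu m → ℝ} {M ε : ℝ} (w : Eu d → Eu m)
    (S : Eu d → Set (Eu d))
    (hm : ∀ᵐ q : Eu d × Eu d, ∀ z₁ z₂ : Eu m, ‖z₁‖ ≤ ‖z₂‖ → f q.1 q.2 z₁ ≤ f q.1 q.2 z₂) :
    ∀ᵐ ξ : Eu d,
      (∫⁻ x in S ξ, ENNReal.ofReal (f x ξ
          (ε⁻¹ • (trunc M (w (x + ε • ξ)) - trunc M (w x))))) ≤
      ∫⁻ x in S ξ, ENNReal.ofReal (f x ξ (ε⁻¹ • (w (x + ε • ξ) - w x))) := by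
  filter_upwards [ae_swap_mono hm] with ξ hξ
  refine lintegral_mono_ae (ae_restrict_of_ae ?_)
  filter_upwards [hξ] with x hx
  refine ENNReal.ofReal_le_ofReal (hx _ _ ?_)
  rw [norm_smul, norm_smul]
  exact mul_le_mul_of_nonneg_left (trunc_lip M _ _) (norm_nonneg _)

end St10Aux

/-- For `u ∈ L^∞(Ω;ℝ^m)`, in the definitions of `F′(u,U)`, `F″(u,U)`, `F′^{,T}(u,U)`,
`F″^{,T}(u,U)` one may restrict the infimum to sequences `u_n → u` in `L¹_loc(Ω;ℝ^m)` with
`‖u_n‖_{L^∞(Ω)} ≤ √m ‖u‖_{L^∞(Ω)}` for every `n`. -/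
theorem statement10 {d m : ℕ} [NeZero d] [NeZero m]
    (Ω : Set (Eu d)) (hΩo : IsOpen Ω) (hΩb : Bornology.IsBounded Ω)
    (f : ℝ → Eu d → Eu d → Eu m → ℝ)
    (hfmeas : ∀ ε > (0 : ℝ), Measurable fun q : Eu d × Eu d × Eu m => f ε q.1 q.2.1 q.2.2)
    (hfnn : ∀ ε > (0 : ℝ), ∀ x ξ z, 0 ≤ f ε x ξ z)
    (hfmono : ∀ ε > (0 : ℝ), ∀ᵐ q : Eu d × Eu d, ∀ z₁ z₂ : Eu m,
      ‖z₁‖ ≤ ‖z₂‖ → f ε q.1 q.2 z₁ ≤ f ε q.1 q.2 z₂)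
    (εn : ℕ → ℝ) (hεpos : ∀ n, 0 < εn n) (hεlim : Tendsto εn atTop (𝓝 0))
    (u : Eu d → Eu m) (humeas : Measurable u)
    (huinf : eLpNorm u ⊤ (volume.restrict Ω) < ⊤)
    (U : Set (Eu d)) (hUo : IsOpen U) (hUΩ : U ⊆ Ω) :
    (Fprime f εn Ω u U =
      ⨅ (un : ℕ → Eu d → Eu m) (_ : ∀ n, MemL1loc Ω (un n)) (_ : TendstoL1loc Ω un u)
        (_ : ∀ n, eLpNorm (un n) ⊤ (volume.restrict Ω) ≤
          ENNReal.ofReal (Real.sqrt m) * eLpNorm u ⊤ (volume.restrict Ω)),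
        Filter.liminf (fun n => Feps (f (εn n)) (εn n) (un n) U) atTop) ∧
    (Fsecond f εn Ω u U =
      ⨅ (un : ℕ → Eu d → Eu m) (_ : ∀ n, MemL1loc Ω (un n)) (_ : TendstoL1loc Ω un u)
        (_ : ∀ n, eLpNorm (un n) ⊤ (volume.restrict Ω) ≤
          ENNReal.ofReal (Real.sqrt m) * eLpNorm u ⊤ (volume.restrict Ω)),
        Filter.limsup (fun n => Feps (f (εn n)) (εn n) (un n) U) atTop) ∧
    (∀ T : ℝ, 0 < T →
      FprimeT f εn T Ω u U =
        ⨅ (un : ℕ → Eu d → Eu m) (_ : ∀ n, MemL1loc Ω (un n)) (_ : TendstoL1loc Ω un u)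
          (_ : ∀ n, eLpNorm (un n) ⊤ (volume.restrict Ω) ≤
            ENNReal.ofReal (Real.sqrt m) * eLpNorm u ⊤ (volume.restrict Ω)),
          Filter.liminf (fun n => FepsT (f (εn n)) (εn n) T (un n) U) atTop) ∧
    (∀ T : ℝ, 0 < T →
      FsecondT f εn T Ω u U =
        ⨅ (un : ℕ → Eu d → Eu m) (_ : ∀ n, MemL1loc Ω (un n)) (_ : TendstoL1loc Ω un u)
          (_ : ∀ n, eLpNorm (un n) ⊤ (volume.restrict Ω) ≤
            ENNReal.ofReal (Real.sqrt m) * eLpNorm u ⊤ (volume.restrict Ω)),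
          Filter.limsup (fun n => FepsT (f (εn n)) (εn n) T (un n) U) atTop) := by
  classical
  set μΩ := volume.restrict Ω with hμΩ
  set N := eLpNorm u ⊤ μΩ with hN
  set M := N.toReal with hMdef
  have hM : 0 ≤ M := ENNReal.toReal_nonneg
  have hNofReal : ENNReal.ofReal M = N := ENNReal.ofReal_toReal huinf.ne
  have haeu : ∀ᵐ x ∂μΩ, ‖u x‖ ≤ M := by
    have h1 := ae_le_eLpNormEssSup (f := u) (μ := μΩ)
    filter_upwards [h1] with x hx
    have hx2 : (‖u x‖₊ : ℝ≥0∞) ≤ N := by rw [hN, eLpNorm_exponent_top]; exact hx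
    have := ENNReal.toReal_mono huinf.ne hx2
    simpa using this
  have htu : ∀ᵐ x ∂μΩ, St10Aux.trunc M (u x) = u x :=
    haeu.mono fun x hx => St10Aux.trunc_eq_self hx
  have hprop : ∀ (un : ℕ → Eu d → Eu m), (∀ n, MemL1loc Ω (un n)) → TendstoL1loc Ω un u →
      (∀ n, MemL1loc Ω (fun x => St10Aux.trunc M (un n x))) ∧
      TendstoL1loc Ω (fun n x => St10Aux.trunc M (un n x)) u ∧
      (∀ n, eLpNorm (fun x => St10Aux.trunc M (un n x)) ⊤ μΩ ≤
        ENNReal.ofReal (Real.sqrt m) * N) := by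
    intro un h1 h2
    refine ⟨?_, ?_, ?_⟩
    · intro n
      refine ⟨(St10Aux.trunc_measurable M).comp (h1 n).1, ?_⟩
      intro K hKΩ hK
      refine Integrable.mono' (g := fun _ => Real.sqrt m * M)
        (integrableOn_const hK.measure_lt_top.ne)
        (((St10Aux.trunc_measurable M).comp (h1 n).1).aestronglyMeasurable) ?_
      exact ae_of_all _ fun x => St10Aux.trunc_norm_le hM _
    · intro K hKΩ hK
      have htuK : ∀ᵐ x ∂volume.restrict K, St10Aux.trunc M (u x) = u x :=
        ae_restrict_of_ae_restrict_of_subset hKΩ htu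
      have hint_u : IntegrableOn u K volume := by
        refine Integrable.mono' (g := fun _ => M)
          (integrableOn_const hK.measure_lt_top.ne)
          humeas.aestronglyMeasurable ?_
        exact ae_restrict_of_ae_restrict_of_subset hKΩ haeu
      refine squeeze_zero (fun n => integral_nonneg fun x => norm_nonneg _)
        (fun n => ?_) (h2 K hKΩ hK)
      refine integral_mono_of_nonneg (ae_of_all _ fun x => norm_nonneg _)
        (((h1 n).2 K hKΩ hK).sub hint_u).norm ?_
      filter_upwards [htuK] with x hx
      calc ‖St10Aux.trunc M (un n x) - u x‖
          = ‖St10Aux.trunc M (un n x) - St10Aux.trunc M (u x)‖ := by rw [hx]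
        _ ≤ ‖un n x - u x‖ := St10Aux.trunc_lip M _ _
    · intro n
      rw [eLpNorm_exponent_top]
      calc eLpNormEssSup (fun x => St10Aux.trunc M (un n x)) μΩ
          ≤ ENNReal.ofReal (Real.sqrt m * M) :=
            eLpNormEssSup_le_of_ae_bound (ae_of_all _ fun x => St10Aux.trunc_norm_le hM _)
        _ = ENNReal.ofReal (Real.sqrt m) * N := by
            rw [ENNReal.ofReal_mul (Real.sqrt_nonneg _), hNofReal]
  have hFeps : ∀ n (w : Eu d → Eu m),
      Feps (f (εn n)) (εn n) (fun x => St10Aux.trunc M (w x)) U ≤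
        Feps (f (εn n)) (εn n) w U := fun n w =>
    lintegral_mono_ae (St10Aux.inner_mono (ε := εn n) w _ (hfmono _ (hεpos n)))
  have hFepsT : ∀ (T : ℝ) (n : ℕ) (w : Eu d → Eu m),
      FepsT (f (εn n)) (εn n) T (fun x => St10Aux.trunc M (w x)) U ≤
        FepsT (f (εn n)) (εn n) T w U := fun T n w =>
    lintegral_mono_ae (ae_restrict_of_ae
      (St10Aux.inner_mono (ε := εn n) w _ (hfmono _ (hεpos n))))
  have key : ∀ (G : ℕ → (Eu d → Eu m) → ℝ≥0∞),
      (∀ n w, G n (fun x => St10Aux.trunc M (w x)) ≤ G n w) →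
      ∀ (L : (ℕ → ℝ≥0∞) → ℝ≥0∞), (∀ a b : ℕ → ℝ≥0∞, (∀ k, a k ≤ b k) → L a ≤ L b) →
      (⨅ (un : ℕ → Eu d → Eu m) (_ : ∀ n, MemL1loc Ω (un n)) (_ : TendstoL1loc Ω un u),
        L (fun n => G n (un n))) =
      ⨅ (un : ℕ → Eu d → Eu m) (_ : ∀ n, MemL1loc Ω (un n)) (_ : TendstoL1loc Ω un u)
        (_ : ∀ n, eLpNorm (un n) ⊤ μΩ ≤ ENNReal.ofReal (Real.sqrt m) * N),
        L (fun n => G n (un n)) := by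
    intro G hG L hL
    apply le_antisymm
    · refine le_iInf fun un => le_iInf fun h1 => le_iInf fun h2 => le_iInf fun _ => ?_
      exact iInf_le_of_le un (iInf_le_of_le h1 (iInf_le_of_le h2 le_rfl))
    · refine le_iInf fun un => le_iInf fun h1 => le_iInf fun h2 => ?_
      obtain ⟨hv1, hv2, hv3⟩ := hprop un h1 h2
      refine le_trans (iInf_le_of_le (fun n x => St10Aux.trunc M (un n x))
        (iInf_le_of_le hv1 (iInf_le_of_le hv2 (iInf_le_of_le hv3 le_rfl)))) ?_
      exact hL _ _ fun k => hG k (un k)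
  have hlim : ∀ a b : ℕ → ℝ≥0∞, (∀ k, a k ≤ b k) →
      liminf a atTop ≤ liminf b atTop :=
    fun a b h => liminf_le_liminf (Eventually.of_forall h)
  have hlims : ∀ a b : ℕ → ℝ≥0∞, (∀ k, a k ≤ b k) →
      limsup a atTop ≤ limsup b atTop :=
    fun a b h => limsup_le_limsup (Eventually.of_forall h)
  refine ⟨?_, ?_, ?_, ?_⟩
  · unfold Fprime gammaLiminf
    exact key (fun n v => Feps (f (εn n)) (εn n) v U) hFeps
      (fun s => liminf s atTop) hlim
  · unfold Fsecond gammaLimsup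
    exact key (fun n v => Feps (f (εn n)) (εn n) v U) hFeps
      (fun s => limsup s atTop) hlims
  · intro T _
    unfold FprimeT gammaLiminf
    exact key (fun n v => FepsT (f (εn n)) (εn n) T v U) (hFepsT T)
      (fun s => liminf s atTop) hlim
  · intro T _
    unfold FsecondT gammaLimsup
    exact key (fun n v => FepsT (f (εn n)) (εn n) T v U) (hFepsT T)
      (fun s => limsup s atTop) hlims
end
end
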